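/- Let V be a finite-dimensional real vector space, L a symmetric 2n-multilinear form on V, q a symmetric bilinear form on V, and C > 0 a real constant with L(x,...,x) = C·q(x,x)^n for all x ∈ V. Suppose a, h ∈ V satisfy q(a,a) > 0, q(a,h) = 0, and L(h,h,a,...,a) < 0 (with a appearing 2n−2 times). Then q(h,h) < 0. -/

import Mathlib

/-!
Expanding `L (t • h + a, …, t • h + a)` by multilinearity and symmetry gives a polynomial in `t`
whose `t ^ 2` coefficient is `(2n).choose 2 * L (h, h, a, …, a)`. Since `q a h = 0`, the Fujiki
relation turns the same expression into `C * (q a a + q h h * t ^ 2) ^ n`, whose `t ^ 2` coefficient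
is `C * n * q a a ^ (n - 1) * q h h`. As `C > 0` and `q a a > 0`, comparing the two coefficients
transfers the sign of `L (h, h, a, …, a)` to `q h h`.
-/

open Finset Polynomial

namespace MultilinearMap

variable {R M N : Type*} [CommSemiring R] [AddCommMonoid M] [Module R M] [AddCommMonoid N]
  [Module R N]

theorem apply_piecewise_const_of_card_eq {ι : Type*} [DecidableEq ι]
    (L : MultilinearMap R (fun _ : ι => M) N) (hL : ∀ (σ : Equiv.Perm ι) v, L (v ∘ σ) = L v)
    (x y : M) {s t : Finset ι} (hst : #s = #t) :
    L (s.piecewise (fun _ => x) (fun _ => y)) = L (t.piecewise (fun _ => x) (fun _ => y)) := by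
  obtain ⟨σ, rfl⟩ := Equiv.Perm.exists_map_finset_eq s t hst
  rw [← hL σ ((s.map σ.toEmbedding).piecewise _ _)]
  congr 1
  ext i
  simp [Finset.piecewise]

variable {m : ℕ} (L : MultilinearMap R (fun _ : Fin m => M) N)

theorem apply_piecewise_const_eq_apply_ite
    (hL : ∀ (σ : Equiv.Perm (Fin m)) v, L (v ∘ σ) = L v) (x y : M) (s : Finset (Fin m)) :
    L (s.piecewise (fun _ => x) (fun _ => y)) = L (fun i => if (i : ℕ) < #s then x else y) := by
  have hcard : #s = #{i : Fin m | (i : ℕ) < #s} := by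
    rw [Fin.card_filter_val_lt, min_eq_right (card_le_univ s |>.trans_eq (Fintype.card_fin m))]
  rw [apply_piecewise_const_of_card_eq L hL x y hcard]
  congr 1
  ext i
  simp [Finset.piecewise]

theorem map_const_add_eq_sum_choose_smul (hL : ∀ (σ : Equiv.Perm (Fin m)) v, L (v ∘ σ) = L v) (x y : M) :
    L (fun _ => x + y) =
      ∑ k ∈ Finset.range (m + 1), m.choose k • L (fun i => if (i : ℕ) < k then x else y) := by
  calc L (fun _ => x + y)
      = ∑ s : Finset (Fin m), L (s.piecewise (fun _ => x) (fun _ => y)) := L.map_add_univ _ _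
    _ = ∑ s : Finset (Fin m), L (fun i => if (i : ℕ) < #s then x else y) := by
      simp only [apply_piecewise_const_eq_apply_ite L hL]
    _ = _ := by
      rw [← powerset_univ, sum_powerset_apply_card (fun k => L fun i => if (i : ℕ) < k then x else y),
        card_univ, Fintype.card_fin]

theorem map_ite_smul (c : R) (x y : M) {k : ℕ} (hk : k ≤ m) :
    L (fun i => if (i : ℕ) < k then c • x else y) =
      c ^ k • L (fun i => if (i : ℕ) < k then x else y) := by
  have := L.map_piecewise_smul (fun _ => c) (fun i => if (i : ℕ) < k then x else y)
    {i : Fin m | (i : ℕ) < k}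
  rw [prod_const, Fin.card_filter_val_lt, min_eq_right hk] at this
  rw [← this]
  congr 1
  ext i
  by_cases hi : (i : ℕ) < k <;> simp [hi]

end MultilinearMap

namespace Polynomial

variable {R : Type*}

theorem coeff_two_C_add_C_mul_X_sq_pow [CommSemiring R] (r w : R) (n : ℕ) :
    ((C r + C w * X ^ 2) ^ n).coeff 2 = n * r ^ (n - 1) * w := by
  rw [show (C r + C w * X ^ 2) ^ n = expand R 2 ((C r + C w * X) ^ n) by simp,
    coeff_expand two_pos, if_pos (dvd_refl 2), Nat.div_self two_pos,
    ← taylor_zero ((C r + C w * X) ^ n), taylor_coeff_one]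
  simp [derivative_pow]

theorem coeff_two_eq_of_forall_sum_eq_mul_add_sq_pow [CommRing R] [IsDomain R] [Infinite R]
    {m : ℕ} (hm : 2 ≤ m) (c : ℕ → R) (K r w : R) (n : ℕ)
    (heq : ∀ t, ∑ k ∈ range (m + 1), c k * t ^ k = K * (r + w * t ^ 2) ^ n) :
    c 2 = K * (n * r ^ (n - 1) * w) := by
  have hpoly : ∑ k ∈ range (m + 1), C (c k) * X ^ k = C K * (C r + C w * X ^ 2) ^ n :=
    Polynomial.funext fun t => by simpa [eval_finsetSum] using heq t
  have hcoeff := congr_arg (coeff · 2) hpoly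
  simp only [finsetSum_coeff, coeff_C_mul, coeff_X_pow, mul_ite, mul_one, mul_zero, sum_ite_eq,
    coeff_two_C_add_C_mul_X_sq_pow] at hcoeff
  rwa [if_pos (mem_range.mpr (by omega))] at hcoeff

end Polynomial

theorem stmt3_general {V : Type*} [AddCommGroup V] [Module ℝ V]
    (n : ℕ) (hn : 1 ≤ n)
    (L : MultilinearMap ℝ (fun _ : Fin (2*n) => V) ℝ)
    (hLsymm : ∀ (σ : Equiv.Perm (Fin (2*n))) (v : Fin (2*n) → V), L (v ∘ σ) = L v)
    (q : V →ₗ[ℝ] V →ₗ[ℝ] ℝ) (hqsymm : ∀ x y, q x y = q y x)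
    (C : ℝ) (hC : 0 < C)
    (hFujiki : ∀ x : V, L (fun _ => x) = C * (q x x)^n)
    (a h : V) (ha : 0 < q a a) (hah : q a h = 0)
    (hL : L (fun i => if (i : ℕ) < 2 then h else a) < 0) :
    q h h < 0 := by
  set f : ℕ → ℝ := fun k => L (fun i => if (i : ℕ) < k then h else a)
  have hexpand : ∀ t : ℝ, ∑ k ∈ range (2 * n + 1), ((2 * n).choose k * f k) * t ^ k
      = C * (q a a + q h h * t ^ 2) ^ n := fun t => by
    have hq : q (t • h + a) (t • h + a) = q a a + q h h * t ^ 2 := by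
      simp only [map_add, map_smul, LinearMap.add_apply, LinearMap.smul_apply, smul_eq_mul,
        hqsymm h a, hah, add_zero, mul_zero, zero_add]
      ring
    rw [← hq, ← hFujiki, L.map_const_add_eq_sum_choose_smul hLsymm]
    refine sum_congr rfl fun k hk => ?_
    rw [L.map_ite_smul t h a (Nat.lt_succ_iff.mp (mem_range.mp hk)), nsmul_eq_mul, smul_eq_mul]
    ring
  have hcoeff := coeff_two_eq_of_forall_sum_eq_mul_add_sq_pow (by omega) _ C _ _ n hexpand
  have hchoose : (0 : ℝ) < (2 * n).choose 2 := by
    exact_mod_cast Nat.choose_pos (by omega)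
  have hneg : C * (n * q a a ^ (n - 1)) * q h h < 0 := by
    rw [mul_assoc C, ← hcoeff]
    exact mul_neg_of_pos_of_neg hchoose hL
  exact neg_of_mul_neg_right hneg (by positivity)

/-- negativity of q on the primitive part. -/
theorem stmt3 {V : Type*} [AddCommGroup V] [Module ℝ V] [FiniteDimensional ℝ V]
    (n : ℕ) (hn : 1 ≤ n)
    (L : MultilinearMap ℝ (fun _ : Fin (2*n) => V) ℝ)
    (hLsymm : ∀ (σ : Equiv.Perm (Fin (2*n))) (v : Fin (2*n) → V), L (v ∘ σ) = L v)
    (q : V →ₗ[ℝ] V →ₗ[ℝ] ℝ) (hqsymm : ∀ x y, q x y = q y x)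
    (C : ℝ) (hC : 0 < C)
    (hFujiki : ∀ x : V, L (fun _ => x) = C * (q x x)^n)
    (a h : V) (ha : 0 < q a a) (hah : q a h = 0)
    (hL : L (fun i => if (i : ℕ) < 2 then h else a) < 0) :
    q h h < 0 :=
  stmt3_general n hn L hLsymm q hqsymm C hC hFujiki a h ha hah hL
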